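/- arXiv:1610.01848 — 2 statements merged into one kernel-verified Lean document; each statement's English description precedes it below -/
import Mathlib

section
/- In A_n^{q,Λ}(K), each z_i = x_i y_i - y_i x_i is a normal element: z_i · A_n^{q,Λ}(K) = A_n^{q,Λ}(K) · z_i. -/
/-- Defining relations of the "symmetric" multiparameter quantized Weyl algebra
`A_n^{q,Λ}(K)`: generators `Sum.inl i = xᵢ`, `Sum.inr i = yᵢ`. -/
inductive SymWeylRel (K : Type*) [Field K] (n : ℕ) (q : Fin n → K) (lam : Fin n → Fin n → K) :
    FreeAlgebra K (Fin n ⊕ Fin n) → FreeAlgebra K (Fin n ⊕ Fin n) → Prop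
  | xx {i j : Fin n} (h : i < j) : SymWeylRel K n q lam
      (FreeAlgebra.ι K (Sum.inl i) * FreeAlgebra.ι K (Sum.inl j))
      (lam i j • (FreeAlgebra.ι K (Sum.inl j) * FreeAlgebra.ι K (Sum.inl i)))
  | yy {i j : Fin n} (h : i < j) : SymWeylRel K n q lam
      (FreeAlgebra.ι K (Sum.inr j) * FreeAlgebra.ι K (Sum.inr i))
      (lam j i • (FreeAlgebra.ι K (Sum.inr i) * FreeAlgebra.ι K (Sum.inr j)))
  | xy {i j : Fin n} (h : i < j) : SymWeylRel K n q lam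
      (FreeAlgebra.ι K (Sum.inl i) * FreeAlgebra.ι K (Sum.inr j))
      (lam j i • (FreeAlgebra.ι K (Sum.inr j) * FreeAlgebra.ι K (Sum.inl i)))
  | yx {i j : Fin n} (h : i < j) : SymWeylRel K n q lam
      (FreeAlgebra.ι K (Sum.inl j) * FreeAlgebra.ι K (Sum.inr i))
      (lam i j • (FreeAlgebra.ι K (Sum.inr i) * FreeAlgebra.ι K (Sum.inl j)))
  | weyl (i : Fin n) : SymWeylRel K n q lam
      (FreeAlgebra.ι K (Sum.inl i) * FreeAlgebra.ι K (Sum.inr i))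
      (q i • (FreeAlgebra.ι K (Sum.inr i) * FreeAlgebra.ι K (Sum.inl i)) + 1)

/-- The "symmetric" multiparameter quantized Weyl algebra `A_n^{q,Λ}(K)`. -/
abbrev SymWeyl (K : Type*) [Field K] (n : ℕ) (q : Fin n → K) (lam : Fin n → Fin n → K) :=
  RingQuot (SymWeylRel K n q lam)

/-- The generator `xᵢ`. -/
noncomputable def wX (K : Type*) [Field K] (n : ℕ) (q : Fin n → K) (lam : Fin n → Fin n → K)
    (i : Fin n) : SymWeyl K n q lam :=
  RingQuot.mkAlgHom K (SymWeylRel K n q lam) (FreeAlgebra.ι K (Sum.inl i))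

/-- The generator `yᵢ`. -/
noncomputable def wY (K : Type*) [Field K] (n : ℕ) (q : Fin n → K) (lam : Fin n → Fin n → K)
    (i : Fin n) : SymWeyl K n q lam :=
  RingQuot.mkAlgHom K (SymWeylRel K n q lam) (FreeAlgebra.ι K (Sum.inr i))

/-- The normal element `zᵢ = xᵢyᵢ - yᵢxᵢ`. -/
noncomputable def wZ (K : Type*) [Field K] (n : ℕ) (q : Fin n → K) (lam : Fin n → Fin n → K)
    (i : Fin n) : SymWeyl K n q lam :=
  wX K n q lam i * wY K n q lam i - wY K n q lam i * wX K n q lam i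


/-! `zᵢ = (qᵢ - 1) yᵢxᵢ + 1` commutes with `xⱼ, yⱼ` for `j ≠ i` (the `λ`-factors of `yᵢ` and `xᵢ`
cancel) and satisfies `xᵢzᵢ = qᵢ zᵢxᵢ`, `zᵢyᵢ = qᵢ yᵢzᵢ`. Hence `a zᵢ = zᵢ σ(a)` for the
automorphism `σ` rescaling `xᵢ ↦ qᵢxᵢ`, `yᵢ ↦ qᵢ⁻¹yᵢ`, and since `σ` is onto, `zᵢA = Azᵢ`. -/

theorem range_mul_left_eq_range_mul_right {M : Type*} [Mul M] {z : M} {σ : M → M}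
    (hσ : Function.Surjective σ) (h : ∀ a, a * z = z * σ a) :
    Set.range (z * ·) = Set.range (· * z) := by
  ext b
  constructor
  · rintro ⟨a, rfl⟩
    obtain ⟨a, rfl⟩ := hσ a
    exact ⟨a, h a⟩
  · rintro ⟨a, rfl⟩
    exact ⟨σ a, (h a).symm⟩

theorem eq_smul_mul_of_mul_eq_smul {K A : Type*} [CommSemiring K] [Semiring A] [Algebra K A]
    {a b : A} {c c' : K} (h : a * b = c • (b * a)) (hc : c' * c = 1) :
    b * a = c' • (a * b) := by
  rw [h, smul_smul, hc, one_smul]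

theorem commute_mul_of_mul_eq_smul {K A : Type*} [CommSemiring K] [Semiring A] [Algebra K A]
    {a b g : A} {c c' : K} (ha : a * g = c • (g * a)) (hb : b * g = c' • (g * b))
    (hc : c' * c = 1) :
    Commute (a * b) g := by
  calc a * b * g = c' • (a * g * b) := by rw [mul_assoc, hb, mul_smul_comm, mul_assoc]
    _ = g * (a * b) := by rw [ha, smul_mul_assoc, smul_smul, hc, one_smul, mul_assoc]

namespace SymWeyl

variable {K : Type*} [Field K] {n : ℕ} {q : Fin n → K} {lam : Fin n → Fin n → K}

local notation "X" => wX K n q lam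
local notation "Y" => wY K n q lam
local notation "Z" => wZ K n q lam

theorem induction_on {P : SymWeyl K n q lam → Prop} (a : SymWeyl K n q lam)
    (algebraMap : ∀ r, P (algebraMap K _ r)) (wX : ∀ j, P (X j)) (wY : ∀ j, P (Y j))
    (add : ∀ a b, P a → P b → P (a + b)) (mul : ∀ a b, P a → P b → P (a * b)) :
    P a := by
  obtain ⟨p, rfl⟩ := RingQuot.mkAlgHom_surjective K (SymWeylRel K n q lam) a
  induction p using FreeAlgebra.induction with
  | grade0 r => simpa only [AlgHom.commutes] using algebraMap r
  | grade1 s => rcases s with j | j; exacts [wX j, wY j]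
  | mul a b ha hb => simpa only [map_mul] using mul _ _ ha hb
  | add a b ha hb => simpa only [map_add] using add _ _ ha hb

theorem wX_mul_wX_of_lt {i j : Fin n} (h : i < j) : X i * X j = lam i j • (X j * X i) := by
  simpa only [wX, wY, map_mul, map_smul] using
    RingQuot.mkAlgHom_rel K (SymWeylRel.xx (q := q) (lam := lam) h)

theorem wY_mul_wY_of_lt {i j : Fin n} (h : i < j) : Y j * Y i = lam j i • (Y i * Y j) := by
  simpa only [wX, wY, map_mul, map_smul] using
    RingQuot.mkAlgHom_rel K (SymWeylRel.yy (q := q) (lam := lam) h)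

theorem wX_mul_wY_of_lt {i j : Fin n} (h : i < j) : X i * Y j = lam j i • (Y j * X i) := by
  simpa only [wX, wY, map_mul, map_smul] using
    RingQuot.mkAlgHom_rel K (SymWeylRel.xy (q := q) (lam := lam) h)

theorem wX_mul_wY_of_gt {i j : Fin n} (h : i < j) : X j * Y i = lam i j • (Y i * X j) := by
  simpa only [wX, wY, map_mul, map_smul] using
    RingQuot.mkAlgHom_rel K (SymWeylRel.yx (q := q) (lam := lam) h)

theorem wX_mul_wY_self (i : Fin n) : X i * Y i = q i • (Y i * X i) + 1 := by
  simpa only [wX, wY, map_mul, map_smul, map_add, map_one] using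
    RingQuot.mkAlgHom_rel K (SymWeylRel.weyl (q := q) (lam := lam) i)

theorem wX_mul_wX (hlam : ∀ i j, lam i j * lam j i = 1) {i j : Fin n}
    (h : i ≠ j) : X i * X j = lam i j • (X j * X i) := by
  rcases h.lt_or_gt with h | h
  · exact wX_mul_wX_of_lt h
  · exact eq_smul_mul_of_mul_eq_smul (wX_mul_wX_of_lt h) (hlam i j)

theorem wY_mul_wY (hlam : ∀ i j, lam i j * lam j i = 1) {i j : Fin n}
    (h : i ≠ j) : Y i * Y j = lam i j • (Y j * Y i) := by
  rcases h.lt_or_gt with h | h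
  · exact eq_smul_mul_of_mul_eq_smul (wY_mul_wY_of_lt h) (hlam i j)
  · exact wY_mul_wY_of_lt h

theorem wX_mul_wY {i j : Fin n} (h : i ≠ j) : X i * Y j = lam j i • (Y j * X i) := by
  rcases h.lt_or_gt with h | h
  · exact wX_mul_wY_of_lt h
  · exact wX_mul_wY_of_gt h

theorem wY_mul_wX (hlam : ∀ i j, lam i j * lam j i = 1) {i j : Fin n}
    (h : i ≠ j) : Y i * X j = lam j i • (X j * Y i) :=
  eq_smul_mul_of_mul_eq_smul (wX_mul_wY h.symm) (hlam j i)

theorem commute_wY_mul_wX_wX (hlam : ∀ i j, lam i j * lam j i = 1) {i j : Fin n}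
    (h : i ≠ j) : Commute (Y i * X i) (X j) :=
  commute_mul_of_mul_eq_smul (wY_mul_wX hlam h) (wX_mul_wX hlam h) (hlam i j)

theorem commute_wY_mul_wX_wY (hlam : ∀ i j, lam i j * lam j i = 1) {i j : Fin n}
    (h : i ≠ j) : Commute (Y i * X i) (Y j) :=
  commute_mul_of_mul_eq_smul (wY_mul_wY hlam h) (wX_mul_wY h) (hlam j i)

theorem wZ_eq (i : Fin n) : Z i = (q i - 1) • (Y i * X i) + 1 := by
  rw [wZ, wX_mul_wY_self]
  module

theorem commute_wZ_of_commute_wY_mul_wX {i : Fin n} {a : SymWeyl K n q lam}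
    (h : Commute (Y i * X i) a) : Commute (Z i) a := by
  rw [wZ_eq]
  exact (h.smul_left _).add_left (Commute.one_left a)

theorem wX_mul_wZ_self (i : Fin n) : X i * Z i = q i • (Z i * X i) := by
  have hXYX : X i * (Y i * X i) = q i • (Y i * X i * X i) + X i := by
    rw [← mul_assoc, wX_mul_wY_self, add_mul, smul_mul_assoc, one_mul]
  rw [wZ_eq, mul_add, add_mul, mul_smul_comm, smul_mul_assoc, hXYX, mul_one, one_mul]
  module

theorem wZ_mul_wY_self (i : Fin n) : Z i * Y i = q i • (Y i * Z i) := by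
  have hYXY : Y i * X i * Y i = q i • (Y i * (Y i * X i)) + Y i := by
    rw [mul_assoc, wX_mul_wY_self, mul_add, mul_smul_comm, mul_one]
  rw [wZ_eq, mul_add, add_mul, mul_smul_comm, smul_mul_assoc, hYXY, mul_one, one_mul]
  module

noncomputable def scale (c : Fin n → Kˣ) : SymWeyl K n q lam →ₐ[K] SymWeyl K n q lam :=
  RingQuot.liftAlgHom K ⟨FreeAlgebra.lift K
    (Sum.elim (fun j => (c j : K) • X j) fun j => (↑(c j)⁻¹ : K) • Y j), fun _ _ r => by
    induction r <;>
      simp only [map_mul, map_smul, map_add, map_one, FreeAlgebra.lift_ι_apply, Sum.elim_inl,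
        Sum.elim_inr, smul_mul_smul_comm, Units.mul_inv, Units.inv_mul, one_smul]
    case xx h => rw [wX_mul_wX_of_lt h]; module
    case yy h => rw [wY_mul_wY_of_lt h]; module
    case xy h => rw [wX_mul_wY_of_lt h]; module
    case yx h => rw [wX_mul_wY_of_gt h]; module
    case weyl i => exact wX_mul_wY_self i⟩

@[simp]
theorem scale_wX (c : Fin n → Kˣ) (j : Fin n) : scale c (X j) = (c j : K) • X j := by
  rw [scale, wX, RingQuot.liftAlgHom_mkAlgHom_apply]
  exact FreeAlgebra.lift_ι_apply _ _

@[simp]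
theorem scale_wY (c : Fin n → Kˣ) (j : Fin n) : scale c (Y j) = (↑(c j)⁻¹ : K) • Y j := by
  rw [scale, wY, RingQuot.liftAlgHom_mkAlgHom_apply]
  exact FreeAlgebra.lift_ι_apply _ _

theorem scale_scale (c d : Fin n → Kˣ) (a : SymWeyl K n q lam) :
    scale c (scale d a) = scale (c * d) a := by
  induction a using induction_on with
  | algebraMap r => simp only [AlgHom.commutes]
  | wX j => simp only [scale_wX, map_smul, smul_smul, Pi.mul_apply, Units.val_mul, mul_comm]
  | wY j => simp only [scale_wY, map_smul, smul_smul, Pi.mul_apply, mul_inv_rev, Units.val_mul]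
  | add a b ha hb => rw [map_add, map_add, map_add, ha, hb]
  | mul a b ha hb => rw [map_mul, map_mul, map_mul, ha, hb]

theorem scale_one (a : SymWeyl K n q lam) : scale 1 a = a := by
  induction a using induction_on with
  | algebraMap r => exact AlgHom.commutes _ r
  | wX j => simp
  | wY j => simp
  | add a b ha hb => rw [map_add, ha, hb]
  | mul a b ha hb => rw [map_mul, ha, hb]

theorem scale_surjective (c : Fin n → Kˣ) :
    Function.Surjective (scale c : SymWeyl K n q lam → SymWeyl K n q lam) := fun a =>
  ⟨scale c⁻¹ a, by rw [scale_scale, mul_inv_cancel, scale_one]⟩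

theorem mul_wZ (hq : ∀ i, q i ≠ 0) (hlam : ∀ i j, lam i j * lam j i = 1) (i : Fin n)
    (a : SymWeyl K n q lam) :
    a * Z i = Z i * scale (Pi.mulSingle i (Units.mk0 (q i) (hq i))) a := by
  induction a using induction_on with
  | algebraMap r => rw [AlgHom.commutes, Algebra.commutes]
  | wX j =>
    rcases eq_or_ne i j with rfl | h
    · rw [scale_wX, Pi.mulSingle_eq_same, Units.val_mk0, mul_smul_comm, wX_mul_wZ_self]
    · rw [scale_wX, Pi.mulSingle_eq_of_ne h.symm, Units.val_one, one_smul]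
      exact (commute_wZ_of_commute_wY_mul_wX (commute_wY_mul_wX_wX hlam h)).eq.symm
  | wY j =>
    rcases eq_or_ne i j with rfl | h
    · rw [scale_wY, Pi.mulSingle_eq_same, Units.val_inv_eq_inv_val, Units.val_mk0, mul_smul_comm,
        wZ_mul_wY_self, inv_smul_smul₀ (hq i)]
    · rw [scale_wY, Pi.mulSingle_eq_of_ne h.symm, inv_one, Units.val_one, one_smul]
      exact (commute_wZ_of_commute_wY_mul_wX (commute_wY_mul_wX_wY hlam h)).eq.symm
  | add a b ha hb => rw [map_add, add_mul, mul_add, ha, hb]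
  | mul a b ha hb => rw [map_mul, mul_assoc, hb, ← mul_assoc, ha, mul_assoc]

end SymWeyl

theorem stmt4_general (K : Type*) [Field K] (n : ℕ) (q : Fin n → K) (lam : Fin n → Fin n → K)
    (hq : ∀ i, q i ≠ 0) (hlam : ∀ i j, lam i j * lam j i = 1)
    (i : Fin n) :
    Set.range (fun a : SymWeyl K n q lam => wZ K n q lam i * a) =
      Set.range (fun a : SymWeyl K n q lam => a * wZ K n q lam i) :=
  range_mul_left_eq_range_mul_right (SymWeyl.scale_surjective _) (SymWeyl.mul_wZ hq hlam i)

theorem stmt4 (K : Type*) [Field K] (n : ℕ) (q : Fin n → K) (lam : Fin n → Fin n → K)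
    (hq : ∀ i, q i ≠ 0) (hlam : ∀ i j, lam i j * lam j i = 1)
    (hlam1 : ∀ i, lam i i = 1)
    (i : Fin n) :
    Set.range (fun a : SymWeyl K n q lam => wZ K n q lam i * a) =
      Set.range (fun a : SymWeyl K n q lam => a * wZ K n q lam i) :=
  stmt4_general K n q lam hq hlam i
end

section
/- If a K-algebra A has center equal to K, then A is cancellative: for any K-algebra B, an isomorphism A[t] ≅ B[t] of K-algebras implies A ≅ B. -/
/-!
An isomorphism `e : A[X] ≃ B[X]` maps the centre of `A[X]`, which is `K[X]` because `Z(A) = K`,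
onto the centre `Z(B)[X]` of `B[X]`. Hence `Z(B)`, which embeds in `K[X]`, is a domain, and
`e⁻¹ X = h(X)` for some `h ∈ K[X]` with `h(e X) = X` in `Z(B)[X]`, which forces `deg h = 1`.
Precomposing `e` with the affine substitution `X ↦ h(X)` of `A[X]` gives an isomorphism fixing
`X`, and reducing it modulo `X` identifies `A` with `B`.
-/

open Polynomial

namespace Polynomial

section Semiring

variable {R A B : Type*} [CommSemiring R] [Semiring A] [Semiring B] [Algebra R A] [Algebra R B]

theorem coeff_zero_apply_C_coeff_zero {F : Type*} [FunLike F A[X] B[X]]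
    [RingHomClass F A[X] B[X]] (f : F) (hf : f X = X) (p : A[X]) :
    (f (C (p.coeff 0))).coeff 0 = (f p).coeff 0 := by
  conv_rhs => rw [← X_mul_divX_add p]
  rw [map_add, map_mul, hf, coeff_add, coeff_X_mul_zero, zero_add]

noncomputable def algEquivOfApplyXEqX (e : A[X] ≃ₐ[R] B[X]) (he : e X = X) : A ≃ₐ[R] B where
  toFun a := (e (C a)).coeff 0
  invFun b := (e.symm (C b)).coeff 0
  left_inv a := by
    simp only [coeff_zero_apply_C_coeff_zero e.symm (e.symm_apply_eq.mpr he.symm),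
      AlgEquiv.symm_apply_apply, coeff_C_zero]
  right_inv b := by
    simp only [coeff_zero_apply_C_coeff_zero e he, AlgEquiv.apply_symm_apply, coeff_C_zero]
  map_mul' := by simp
  map_add' := by simp
  commutes' r := by
    rw [← algebraMap_apply, AlgEquiv.commutes, algebraMap_apply, coeff_C_zero]

variable (A) in
noncomputable def baseChangeAlgEquiv (τ : R[X] ≃ₐ[R] R[X]) : A[X] ≃ₐ[R] A[X] :=
  (polyEquivTensor R A).trans
    ((Algebra.TensorProduct.congr AlgEquiv.refl τ).trans (polyEquivTensor R A).symm)

@[simp]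
theorem baseChangeAlgEquiv_apply_X (τ : R[X] ≃ₐ[R] R[X]) :
    baseChangeAlgEquiv A τ X = (τ X).map (algebraMap R A) := by
  simp [baseChangeAlgEquiv]

theorem nonempty_algEquiv_of_symm_apply_X (e : A[X] ≃ₐ[R] B[X]) (τ : R[X] ≃ₐ[R] R[X])
    (h : e.symm X = (τ X).map (algebraMap R A)) : Nonempty (A ≃ₐ[R] B) :=
  ⟨algEquivOfApplyXEqX ((baseChangeAlgEquiv A τ).trans e) (by simp [← h])⟩

theorem coeff_mem_center {p : A[X]} (hp : p ∈ Subalgebra.center R A[X]) (n : ℕ) :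
    p.coeff n ∈ Subalgebra.center R A := by
  rw [Subalgebra.mem_center_iff] at hp ⊢
  intro a
  simpa [coeff_C_mul, coeff_mul_C] using congr_arg (coeff · n) (hp (C a))

theorem C_mem_center {a : A} (ha : a ∈ Subalgebra.center R A) :
    C a ∈ Subalgebra.center R A[X] := by
  rw [Subalgebra.mem_center_iff] at ha ⊢
  intro p
  ext n
  rw [coeff_mul_C, coeff_C_mul, ha]

theorem X_mem_center : (X : A[X]) ∈ Subalgebra.center R A[X] :=
  Subalgebra.mem_center_iff.mpr fun p => (commute_X p).eq.symm

theorem mem_lifts_of_mem_center {p : A[X]} (hp : p ∈ Subalgebra.center R A[X]) :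
    p ∈ lifts ((Subalgebra.center R A).val : Subalgebra.center R A →+* A) :=
  (lifts_iff_coeff_lifts p).mpr fun n => ⟨⟨_, coeff_mem_center hp n⟩, rfl⟩

theorem mem_lifts_of_mem_center_of_center_eq_bot (hA : Subalgebra.center R A = ⊥) {p : A[X]}
    (hp : p ∈ Subalgebra.center R A[X]) : p ∈ lifts (algebraMap R A) :=
  (lifts_iff_coeff_lifts p).mpr fun n => Algebra.mem_bot.mp (hA ▸ coeff_mem_center hp n)

theorem _root_.AlgEquiv.apply_mem_center (e : A ≃ₐ[R] B) {a : A}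
    (ha : a ∈ Subalgebra.center R A) : e a ∈ Subalgebra.center R B :=
  (MulEquivClass.apply_mem_center_iff e).mpr ha

end Semiring

theorem natDegree_eq_one_of_aeval_eq_X {K D : Type*} [Field K] [CommRing D] [NoZeroDivisors D]
    [Nontrivial D] [Algebra K D] {h : K[X]} {P : D[X]} (hP : aeval P h = X) :
    h.natDegree = 1 := by
  have hcomp : (h.map (algebraMap K D)).comp P = X := by
    rwa [comp, eval₂_map, ← algebraMap_eq, ← IsScalarTower.algebraMap_eq, ← aeval_def]
  have := congr_arg natDegree hcomp
  rw [natDegree_comp, natDegree_X, natDegree_map_eq_of_injective (algebraMap K D).injective] at this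
  exact Nat.eq_one_of_mul_eq_one_right this

section Field

variable {K A B : Type*} [Field K] [Ring A] [Ring B] [Algebra K A] [Algebra K B]

theorem eq_zero_or_eq_zero_of_mul_eq_zero_of_mem_center [Nontrivial A]
    (hA : Subalgebra.center K A = ⊥) {p q : A[X]} (hp : p ∈ Subalgebra.center K A[X])
    (hq : q ∈ Subalgebra.center K A[X]) (hpq : p * q = 0) : p = 0 ∨ q = 0 := by
  obtain ⟨p', rfl⟩ := mem_lifts_of_mem_center_of_center_eq_bot hA hp
  obtain ⟨q', rfl⟩ := mem_lifts_of_mem_center_of_center_eq_bot hA hq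
  rw [← map_mul, map_eq_zero_iff _ (map_injective _ (algebraMap K A).injective),
    mul_eq_zero] at hpq
  simpa using hpq

theorem natDegree_eq_one_of_symm_apply_X [Nontrivial A] (hA : Subalgebra.center K A = ⊥)
    (e : A[X] ≃ₐ[K] B[X]) {h : K[X]} (hh : e.symm X = h.map (algebraMap K A)) :
    h.natDegree = 1 := by
  let D := Subalgebra.center K B
  have : Nontrivial B := nontrivial_iff.mp e.symm.toEquiv.nontrivial
  have : NoZeroDivisors D := ⟨fun {c d} hcd => by
    simpa using eq_zero_or_eq_zero_of_mul_eq_zero_of_mem_center hA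
      (e.symm.apply_mem_center (C_mem_center c.2)) (e.symm.apply_mem_center (C_mem_center d.2))
      (by rw [← map_mul, ← C_mul, ← MulMemClass.coe_mul, hcd]; simp)⟩
  obtain ⟨P, hP⟩ := mem_lifts_of_mem_center (e.apply_mem_center X_mem_center)
  have hPh : aeval P h = X := by
    apply map_injective (D.val : D →+* B) Subtype.val_injective
    rw [coe_mapRingHom, ← coe_mapAlgHom] at hP
    rw [← coe_mapAlgHom, ← aeval_algHom_apply, hP, aeval_algHom_apply]
    change e (h.map (algebraMap K A)) = _
    rw [← hh, e.apply_symm_apply, coe_mapAlgHom, map_X]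
  exact natDegree_eq_one_of_aeval_eq_X hPh

theorem exists_algEquiv_symm_apply_X_eq_map (hA : Subalgebra.center K A = ⊥)
    (e : A[X] ≃ₐ[K] B[X]) :
    ∃ τ : K[X] ≃ₐ[K] K[X], e.symm X = (τ X).map (algebraMap K A) := by
  rcases subsingleton_or_nontrivial A with _ | _
  · exact ⟨AlgEquiv.refl, Subsingleton.elim _ _⟩
  obtain ⟨h, hh⟩ :=
    mem_lifts_of_mem_center_of_center_eq_bot hA (e.symm.apply_mem_center X_mem_center)
  rw [coe_mapRingHom] at hh
  obtain ⟨v, hv, u, rfl⟩ := natDegree_eq_one.mp (natDegree_eq_one_of_symm_apply_X hA e hh.symm)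
  have := invertibleOfNonzero hv
  exact ⟨algEquivCMulXAddC v u, by simp [← hh]⟩

end Field

end Polynomial

theorem stmt8 (K : Type*) [Field K] (A : Type*) [Ring A] [Algebra K A]
    (hcenter : Subalgebra.center K A = ⊥) (B : Type*) [Ring B] [Algebra K B]
    (e : Polynomial A ≃ₐ[K] Polynomial B) :
    Nonempty (A ≃ₐ[K] B) := by
  obtain ⟨τ, hτ⟩ := exists_algEquiv_symm_apply_X_eq_map hcenter e
  exact nonempty_algEquiv_of_symm_apply_X e τ hτ
end
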